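/- For all nonnegative integers γ₁, γ₂, γ₃, the following symmetry identity of Γ-series holds: substituting (z₄, −z₃, −z₂, z₁) for the variables of F_{(γ₁,γ₂,γ₃,0)} yields F_{(γ₁,γ₂,γ₃,0)}(z₄, −z₃, −z₂, z₁) = (−1)^{γ₂+γ₃} · F_{(0,γ₃,γ₂,γ₁)}(z₁, z₂, z₃, z₄), as an identity of polynomials in ℂ[z₁,z₂,z₃,z₄]. -/
import Mathlib


open MvPolynomial Finset

/-- The hypergeometric Γ-series `F_γ` evaluated on a quadruple `z` of polynomials. -/
noncomputable def GammaSeriesAt {σ : Type} (γ : Fin 4 → ℤ)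
    (z : Fin 4 → MvPolynomial σ ℂ) : MvPolynomial σ ℂ :=
  ∑ n ∈ Finset.Icc (max (-γ 0) (-γ 3)) (min (γ 1) (γ 2)),
    MvPolynomial.C ((((γ 0 + n).toNat.factorial * (γ 1 - n).toNat.factorial *
        (γ 2 - n).toNat.factorial * (γ 3 + n).toNat.factorial : ℕ) : ℂ))⁻¹ *
      (z 0 ^ (γ 0 + n).toNat * z 1 ^ (γ 1 - n).toNat *
        z 2 ^ (γ 2 - n).toNat * z 3 ^ (γ 3 + n).toNat)

/-- The symmetry identity
`F_{(γ₁,γ₂,γ₃,0)}(z₄, −z₃, −z₂, z₁) = (−1)^{γ₂+γ₃} F_{(0,γ₃,γ₂,γ₁)}(z₁,z₂,z₃,z₄)`. -/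
theorem gammaSeries_symmetry (g1 g2 g3 : ℕ) :
    GammaSeriesAt ![(g1 : ℤ), g2, g3, 0]
        ![(X 3 : MvPolynomial (Fin 4) ℂ), -X 2, -X 1, X 0] =
      (-1 : MvPolynomial (Fin 4) ℂ) ^ (g2 + g3) *
        GammaSeriesAt ![(0 : ℤ), g3, g2, g1] X := by
  unfold GammaSeriesAt
  simp only [Matrix.cons_val_zero, Matrix.cons_val_one, Matrix.head_cons,
    Matrix.cons_val_two, Matrix.cons_val_three, Matrix.tail_cons,
    neg_zero, neg_neg, max_self, add_zero, zero_add, zero_sub, sub_zero]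
  rw [Finset.mul_sum, min_comm (g3:ℤ) (g2:ℤ), max_comm]
  apply Finset.sum_congr rfl
  intro n hn
  simp only [Finset.mem_Icc] at hn
  obtain ⟨hn0, hn1⟩ := hn
  have h0 : (0:ℤ) ≤ n := le_trans (le_max_left _ _) hn0
  have h1 : n ≤ g2 := le_trans hn1 (min_le_left _ _)
  have h2 : n ≤ g3 := le_trans hn1 (min_le_right _ _)
  have key : ((-1 : MvPolynomial (Fin 4) ℂ))^(g2+g3)
      = (-1)^((↑g2 - n).toNat) * (-1)^((↑g3 - n).toNat) := by
    have h : g2 + g3 = ((↑g2 - n).toNat + (↑g3 - n).toNat) + 2 * n.toNat := by omega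
    rw [h, pow_add, pow_add, pow_mul]
    simp
  have hfac : n.toNat.factorial * (↑g3 - n).toNat.factorial * (↑g2 - n).toNat.factorial
      * (↑g1 + n).toNat.factorial
      = (↑g1 + n).toNat.factorial * (↑g2 - n).toNat.factorial * (↑g3 - n).toNat.factorial
      * n.toNat.factorial := by ring
  rw [neg_pow, neg_pow, key, hfac]
  ring
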